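/- arXiv:2003.12541 — 5 statements merged into one kernel-verified Lean document; each statement's English description precedes it below -/
import Mathlib

section
/- Let p be a prime number and let l ≤ j be natural numbers. Then the p-adic valuation of the rational number (p·l)! · p^(j−l) / (l! · (j−l)!) is at least l + min(j−l, p−1). -/
/-!
Since `v_p((p l)!) = v_p(l!) + l`, the valuation in question is `l + m - v_p(m!)` with
`m = j - l`, so it suffices that `v_p(m!) + min m (p - 1) ≤ m`. By Legendre's formula
`(p - 1) v_p(m!) = m - s_p(m) < m` for `m ≠ 0`, and `v + q ≤ q v + 1` for `q, v ≥ 1`.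
-/

theorem Nat.add_min_le_of_mul_lt {q v m : ℕ} (hq : 0 < q) (h : q * v < m) :
    v + min m q ≤ m := by
  rcases Nat.eq_zero_or_pos v with rfl | hv
  · simp
  · have : v + q ≤ q * v + 1 := by nlinarith
    omega

theorem padicValNat_factorial_add_min_le (p m : ℕ) [Fact p.Prime] :
    padicValNat p m.factorial + min m (p - 1) ≤ m := by
  rcases eq_or_ne m 0 with rfl | hm
  · simp
  · exact Nat.add_min_le_of_mul_lt (Nat.sub_pos_of_lt (Fact.out : p.Prime).one_lt)
      (sub_one_mul_padicValNat_factorial_lt_of_ne_zero p hm)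

theorem padicValRat_factorial_estimate_general (p : ℕ) (hp : p.Prime) (l j : ℕ) :
    ((l + min (j - l) (p - 1) : ℕ) : ℤ) ≤
      padicValRat p ((((p * l).factorial : ℚ) * (p : ℚ) ^ (j - l)) /
        ((l.factorial : ℚ) * ((j - l).factorial : ℚ))) := by
  have : Fact p.Prime := ⟨hp⟩
  have hp0 : (p : ℚ) ≠ 0 := Nat.cast_ne_zero.mpr hp.ne_zero
  have hfac (n : ℕ) : (n.factorial : ℚ) ≠ 0 := Nat.cast_ne_zero.mpr n.factorial_ne_zero
  have hval : padicValRat p ((((p * l).factorial : ℚ) * (p : ℚ) ^ (j - l)) /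
        ((l.factorial : ℚ) * ((j - l).factorial : ℚ))) =
      l + (j - l : ℕ) - padicValNat p (j - l).factorial := by
    rw [padicValRat.div (mul_ne_zero (hfac _) (pow_ne_zero _ hp0)) (mul_ne_zero (hfac _) (hfac _)),
      padicValRat.mul (hfac _) (pow_ne_zero _ hp0), padicValRat.mul (hfac _) (hfac _),
      padicValRat.pow, padicValRat.self hp.one_lt, padicValRat.of_nat, padicValRat.of_nat,
      padicValRat.of_nat, padicValNat_factorial_mul]
    push_cast
    ring
  have hbound := padicValNat_factorial_add_min_le p (j - l)
  rw [hval]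
  omega

/-- For a prime `p` and naturals `l ≤ j`, the `p`-adic valuation of the rational
number `(p*l)! * p^(j-l) / (l! * (j-l)!)` is at least `l + min (j-l) (p-1)`. -/
theorem padicValRat_factorial_estimate (p : ℕ) (hp : p.Prime) (l j : ℕ) (hlj : l ≤ j) :
    ((l + min (j - l) (p - 1) : ℕ) : ℤ) ≤
      padicValRat p ((((p * l).factorial : ℚ) * (p : ℚ) ^ (j - l)) /
        ((l.factorial : ℚ) * ((j - l).factorial : ℚ))) :=
  padicValRat_factorial_estimate_general p hp l j
end

section
/- Let R be a commutative ring, M an R-module, and x, y ∈ R. Assume: (i) ⋂ₙ xⁿM = 0 (M is x-adically separated); (ii) multiplication by x is injective on M; (iii) multiplication by y is injective on M/xM. Then multiplication by y is injective on M and multiplication by x is injective on M/yM. In other words, if (x, y) is a weakly regular sequence on M and M is x-adically separated, then (y, x) is a weakly regular sequence on M. -/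
/-! A `y`-torsion element of `M` is divisible by `x` with a `y`-torsion quotient, since `y` is
regular on `M ⧸ xM` and `x` is regular on `M`. Hence the `y`-torsion submodule `K` satisfies
`K ≤ x • K ≤ xⁿ • K ≤ xⁿ M` for all `n`, and separatedness kills it. Once `x` and `y` are both
regular on `M`, regularity of `y` on `M ⧸ xM` and of `x` on `M ⧸ yM` both say `xM ∩ yM = xyM`. -/

open Submodule Pointwise

namespace Submodule

section CommSemiring

variable {R M : Type*} [CommSemiring R] [AddCommMonoid M] [Module R M]
  {I : Ideal R} {N : Submodule R M}

theorem le_pow_smul_of_le_smul (h : N ≤ I • N) (n : ℕ) : N ≤ I ^ n • N := by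
  induction n with
  | zero => rw [pow_zero, Ideal.one_eq_top, top_smul]
  | succ n ih =>
    calc N ≤ I ^ n • N := ih
      _ ≤ I ^ n • I • N := smul_mono_right _ h
      _ = I ^ (n + 1) • N := by rw [pow_succ, Submodule.mul_smul]

theorem eq_bot_of_le_smul_of_iInf_pow_smul_top_eq_bot
    (hsep : ⨅ n : ℕ, I ^ n • (⊤ : Submodule R M) = ⊥) (h : N ≤ I • N) : N = ⊥ :=
  eq_bot_iff.mpr <| hsep ▸ le_iInf fun n =>
    (le_pow_smul_of_le_smul h n).trans (smul_mono_right _ le_top)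

end CommSemiring

variable {R M : Type*} [CommRing R] [AddCommGroup M] [Module R M] {x y : R}

theorem torsionBy_le_smul_torsionBy (hx : IsSMulRegular M x)
    (hy : IsSMulRegular (QuotSMulTop x M) y) :
    torsionBy R M y ≤ x • torsionBy R M y := by
  intro m (hm : y • m = 0)
  have hmx : m ∈ x • (⊤ : Submodule R M) :=
    mem_of_isSMulRegular_quotient_of_smul_mem hy (hm ▸ zero_mem _)
  obtain ⟨m', -, rfl⟩ := mem_smul_pointwise_iff_exists _ _ _ |>.mp hmx
  have hm' : y • m' = 0 := hx.right_eq_zero_of_smul (by rwa [smul_comm])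
  exact smul_mem_pointwise_smul m' x _ hm'

end Submodule

theorem IsSMulRegular.quotSMulTop_swap {R M : Type*} [CommRing R] [AddCommGroup M]
    [Module R M] {x y : R} (hx : IsSMulRegular M x) (hy : IsSMulRegular M y)
    (h : IsSMulRegular (QuotSMulTop x M) y) : IsSMulRegular (QuotSMulTop y M) x := by
  rw [hx.isSMulRegular_on_quot_iff_smul_top_inf_eq_smul, inf_comm, smul_comm]
  exact (hy.isSMulRegular_on_quot_iff_smul_top_inf_eq_smul _).mp h

/-- If `(x, y)` is a weakly regular sequence on `M` and `M` is `x`-adically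
separated, then `(y, x)` is a weakly regular sequence on `M`. -/
theorem weaklyRegular_swap {R : Type*} [CommRing R] {M : Type*} [AddCommGroup M]
    [Module R M] (x y : R)
    (hsep : (⨅ n : ℕ, (Ideal.span {x}) ^ n • (⊤ : Submodule R M)) = ⊥)
    (hx : Function.Injective (fun m : M => x • m))
    (hy : Function.Injective
      (fun m : M ⧸ (Ideal.span {x} • (⊤ : Submodule R M)) => y • m)) :
    Function.Injective (fun m : M => y • m) ∧
    Function.Injective
      (fun m : M ⧸ (Ideal.span {y} • (⊤ : Submodule R M)) => x • m) := by
  rw [ideal_span_singleton_smul] at hy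
  rw [ideal_span_singleton_smul]
  have hy' : IsSMulRegular M y := by
    refine (isSMulRegular_iff_torsionBy_eq_bot M y).mpr <|
      eq_bot_of_le_smul_of_iInf_pow_smul_top_eq_bot hsep ?_
    rw [ideal_span_singleton_smul]
    exact torsionBy_le_smul_torsionBy hx hy
  exact ⟨hy', IsSMulRegular.quotSMulTop_swap hx hy' hy⟩
end

section
/- Let A be a commutative ring, let a, b, b' ∈ A, and let n ≥ 1 be a natural number such that b' − bⁿ lies in the ideal aA. Assume that A is separated for the (a, b)-adic topology, i.e. ⋂ₘ (a, b)ᵐ = 0 where (a, b) is the ideal generated by a and b, and that (b, a) is a weakly regular sequence on A (b is a nonzerodivisor in A and a is a nonzerodivisor in A/bA). Then (a, b), (a, b') and (b', a) are all weakly regular sequences on A. -/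
/-!
Swapping a weakly regular pair `(x, y)` only needs `x`-adic separatedness: if `y * z = 0`, then
regularity of `y` modulo `x` and of `x` peel off one factor of `x` from `z` at a time, so `z` lies
in every `xᵐ A`. Hence `(b, a)` gives `(a, b)`; since `b' ≡ bⁿ mod a`, the class of `b'` in `A ⧸ (a)`
is a power of that of `b` and so still a nonzerodivisor, giving `(a, b')`; swapping once more
gives `(b', a)`.
-/

/-- `(x, y)` is a weakly regular sequence on the commutative ring `A`:
`x` is a nonzerodivisor on `A` and `y` is a nonzerodivisor on `A ⧸ (x)`. -/
def WeaklyRegularPair {A : Type*} [CommRing A] (x y : A) : Prop :=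
  (∀ z : A, x * z = 0 → z = 0) ∧
  (∀ z : A ⧸ Ideal.span {x}, Ideal.Quotient.mk (Ideal.span {x}) y * z = 0 → z = 0)

section

open Ideal

variable {A : Type*} [CommRing A] {x y : A}

lemma weaklyRegularPair_iff :
    WeaklyRegularPair x y ↔
      (∀ z : A, x * z = 0 → z = 0) ∧ ∀ z : A, y * z ∈ span {x} → z ∈ span {x} := by
  refine and_congr_right fun _ => ⟨fun h z hz => ?_, fun h z hz => ?_⟩
  · rw [← Ideal.Quotient.eq_zero_iff_mem] at hz ⊢
    exact h _ (by rwa [← map_mul])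
  · obtain ⟨z, rfl⟩ := Ideal.Quotient.mk_surjective z
    rw [← map_mul, Ideal.Quotient.eq_zero_iff_mem] at hz
    exact Ideal.Quotient.eq_zero_iff_mem.mpr (h z hz)

namespace WeaklyRegularPair

lemma of_sub_mem {y' : A} (h : WeaklyRegularPair x y) (hy : y' - y ∈ span {x}) :
    WeaklyRegularPair x y' :=
  ⟨h.1, by rw [Ideal.Quotient.eq.mpr hy]; exact h.2⟩

lemma pow (h : WeaklyRegularPair x y) (n : ℕ) : WeaklyRegularPair x (y ^ n) := by
  refine ⟨h.1, ?_⟩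
  rw [map_pow, ← isLeftRegular_iff_right_eq_zero_of_mul]
  exact (isLeftRegular_iff_right_eq_zero_of_mul.mpr h.2).pow n

lemma mem_span_pow_of_mul_eq_zero (h : WeaklyRegularPair x y) {z : A} (hz : y * z = 0)
    (m : ℕ) : z ∈ span {x ^ m} := by
  induction m generalizing z with
  | zero => simp
  | succ m ih =>
    obtain ⟨w, rfl⟩ := mem_span_singleton'.mp <|
      (weaklyRegularPair_iff.mp h).2 z (hz ▸ zero_mem _)
    have hw : y * w = 0 := h.1 _ (by linear_combination hz)
    obtain ⟨c, rfl⟩ := mem_span_singleton'.mp (ih hw)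
    exact mem_span_singleton'.mpr ⟨c, by ring⟩

lemma swap (h : WeaklyRegularPair x y) (hsep : ⨅ m : ℕ, span {x} ^ m = ⊥) :
    WeaklyRegularPair y x := by
  obtain ⟨hx, hy⟩ := weaklyRegularPair_iff.mp h
  refine weaklyRegularPair_iff.mpr ⟨fun z hz => ?_, fun z hz => ?_⟩
  · rw [← mem_bot, ← hsep, mem_iInf]
    intro m
    rw [span_singleton_pow]
    exact h.mem_span_pow_of_mul_eq_zero hz m
  · obtain ⟨w, hw⟩ := mem_span_singleton'.mp hz
    obtain ⟨c, rfl⟩ := mem_span_singleton'.mp <|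
      hy w (mem_span_singleton'.mpr ⟨z, by linear_combination -hw⟩)
    have hzc : z - y * c = 0 := hx _ (by linear_combination -hw)
    exact mem_span_singleton'.mpr ⟨c, by linear_combination -hzc⟩

end WeaklyRegularPair

lemma iInf_span_singleton_pow_eq_bot {I : Ideal A} (hx : x ∈ I) (hsep : ⨅ m : ℕ, I ^ m = ⊥) :
    ⨅ m : ℕ, span {x} ^ m = ⊥ :=
  eq_bot_iff.mpr <| hsep ▸ iInf_mono fun m =>
    pow_right_mono ((span_singleton_le_iff_mem I).mpr hx) m

end

theorem weaklyRegularPair_of_congr_general {A : Type*} [CommRing A] (a b b' : A) (n : ℕ)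
    (hcong : b' - b ^ n ∈ Ideal.span {a})
    (hsep : (⨅ m : ℕ, (Ideal.span {a, b}) ^ m) = ⊥)
    (hba : WeaklyRegularPair b a) :
    WeaklyRegularPair a b ∧ WeaklyRegularPair a b' ∧ WeaklyRegularPair b' a := by
  have hsep_a : ⨅ m : ℕ, Ideal.span {a} ^ m = ⊥ :=
    iInf_span_singleton_pow_eq_bot (Ideal.subset_span (by simp)) hsep
  have hsep_b : ⨅ m : ℕ, Ideal.span {b} ^ m = ⊥ :=
    iInf_span_singleton_pow_eq_bot (Ideal.subset_span (by simp)) hsep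
  have hab := hba.swap hsep_b
  have hab' := (hab.pow n).of_sub_mem hcong
  exact ⟨hab, hab', hab'.swap hsep_a⟩

/-- If `b' ≡ bⁿ mod a`, `A` is `(a,b)`-adically separated, and `(b, a)` is a
weakly regular sequence on `A`, then `(a, b)`, `(a, b')` and `(b', a)` are all
weakly regular sequences on `A`. -/
theorem weaklyRegularPair_of_congr {A : Type*} [CommRing A] (a b b' : A) (n : ℕ)
    (hn : 1 ≤ n) (hcong : b' - b ^ n ∈ Ideal.span {a})
    (hsep : (⨅ m : ℕ, (Ideal.span {a, b}) ^ m) = ⊥)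
    (hba : WeaklyRegularPair b a) :
    WeaklyRegularPair a b ∧ WeaklyRegularPair a b' ∧ WeaklyRegularPair b' a :=
  weaklyRegularPair_of_congr_general a b b' n hcong hsep hba
end

section
/- Let p be a prime number and let V be a perfect commutative ring of characteristic p, i.e., the Frobenius x ↦ x^p is bijective on V. For every integer i ≥ 1, the map W(V) → W(V) sending x to F(x) − pⁱ·x, where F is the Witt vector Frobenius, is bijective. Equivalently, the map x ↦ x − pⁱ·F⁻¹(x) is bijective on W(V). -/
/-!
In characteristic `p` the Witt vector Frobenius raises every coefficient to the `p`-th power,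
while the `n`-th coefficient of `y + z·x·p` only involves `x₀, …, x_{n-1}`, because
multiplication by `p` shifts coefficients up by one. Hence, over a perfect ring,
`F x - z·x·p = y` is a recursion `xₙ = ((y + z·x·p)ₙ)^{1/p}` for the coefficients of `x`,
which has exactly one solution.
-/

open Function

section StrictlyCausal

variable {α : Type*}

def StrictlyCausal (g : (ℕ → α) → ℕ → α) : Prop :=
  ∀ s t n, (∀ m < n, s m = t m) → g s n = g t n

def causalFix [Inhabited α] (g : (ℕ → α) → ℕ → α) : ℕ → α
  | n => g (fun m => if m < n then causalFix g m else default) n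
termination_by n => n
decreasing_by assumption

variable {g : (ℕ → α) → ℕ → α}

theorem StrictlyCausal.isFixedPt_causalFix [Inhabited α] (hg : StrictlyCausal g) :
    IsFixedPt g (causalFix g) := by
  funext n
  conv_rhs => rw [causalFix]
  exact hg _ _ n fun m hm => (if_pos hm).symm

theorem StrictlyCausal.eq_of_isFixedPt (hg : StrictlyCausal g) {s t : ℕ → α}
    (hs : IsFixedPt g s) (ht : IsFixedPt g t) : s = t := by
  funext n
  induction n using Nat.strong_induction_on with
  | _ n ih => exact (congrFun hs n).symm.trans ((hg s t n ih).trans (congrFun ht n))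

theorem StrictlyCausal.existsUnique_isFixedPt [Nonempty α] (hg : StrictlyCausal g) :
    ∃! s, IsFixedPt g s :=
  have := Classical.inhabited_of_nonempty ‹Nonempty α›
  ⟨causalFix g, hg.isFixedPt_causalFix,
    fun _ hs => hg.eq_of_isFixedPt hs hg.isFixedPt_causalFix⟩

end StrictlyCausal

namespace WittVector

variable {p : ℕ} [Fact p.Prime] {R : Type*} [CommRing R]

local notation "𝕎" => WittVector p

theorem truncate_eq_iff {n : ℕ} {x y : 𝕎 R} :
    truncate n x = truncate n y ↔ ∀ m < n, x.coeff m = y.coeff m := by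
  refine ⟨fun h m hm => ?_, fun h => TruncatedWittVector.ext fun m => ?_⟩
  · simpa only [coeff_truncate] using congrArg (TruncatedWittVector.coeff ⟨m, hm⟩) h
  · simpa only [coeff_truncate] using h m m.is_lt

variable [CharP R p]

theorem truncate_succ_mul_p_eq {n : ℕ} {x y : 𝕎 R} (h : truncate n x = truncate n y) :
    truncate (n + 1) (x * p : 𝕎 R) = truncate (n + 1) (y * p : 𝕎 R) := by
  rw [truncate_eq_iff] at h ⊢
  rintro (_ | m) hm
  · rw [mul_charP_coeff_zero, mul_charP_coeff_zero]
  · rw [mul_charP_coeff_succ, mul_charP_coeff_succ, h m (by omega)]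

theorem strictlyCausal_coeff_add_mul_p (y z : 𝕎 R) :
    StrictlyCausal fun s : ℕ → R => (y + z * mk p s * p).coeff := by
  intro s t n hst
  have hx : truncate n (mk p s) = truncate n (mk p t) := truncate_eq_iff.2 hst
  have hzx : truncate n (z * mk p s) = truncate n (z * mk p t) := by
    rw [map_mul, map_mul, hx]
  have hsum : truncate (n + 1) (y + z * mk p s * p : 𝕎 R) =
      truncate (n + 1) (y + z * mk p t * p : 𝕎 R) := by
    rw [map_add, map_add, truncate_succ_mul_p_eq hzx]
  exact truncate_eq_iff.1 hsum n n.lt_succ_self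

theorem existsUnique_frobenius_sub_mul_p_eq [PerfectRing R p] (y z : 𝕎 R) :
    ∃! x : 𝕎 R, frobenius x - z * x * p = y := by
  set g : (ℕ → R) → ℕ → R :=
    fun s n => (_root_.frobeniusEquiv R p).symm ((y + z * mk p s * p).coeff n)
  have hg : StrictlyCausal g := fun s t n hst =>
    congrArg (_root_.frobeniusEquiv R p).symm (strictlyCausal_coeff_add_mul_p y z s t n hst)
  have hfix (x : 𝕎 R) : frobenius x - z * x * p = y ↔ IsFixedPt g x.coeff := by
    simp only [sub_eq_iff_eq_add, WittVector.ext_iff, coeff_frobenius_charP, IsFixedPt,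
      funext_iff, g, RingEquiv.symm_apply_eq, frobeniusEquiv_def]
    exact forall_congr' fun n => eq_comm
  obtain ⟨s, hs, hunique⟩ := hg.existsUnique_isFixedPt
  exact ⟨mk p s, (hfix _).2 hs, fun x hx => congrArg (mk p) (hunique _ ((hfix x).1 hx))⟩

end WittVector

/-- For a perfect commutative ring `V` of characteristic `p` and `i ≥ 1`, the map
`x ↦ F(x) - pⁱ·x` on the ring of `p`-typical Witt vectors `W(V)` is bijective,
where `F` is the Witt vector Frobenius.  Equivalently, `x ↦ x - pⁱ·F⁻¹(x)` is
bijective on `W(V)`. -/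
theorem wittVector_frobenius_sub_pow_bijective (p : ℕ) [Fact p.Prime]
    (V : Type*) [CommRing V] [CharP V p]
    (hV : Function.Bijective (fun x : V => x ^ p)) (i : ℕ) (hi : 1 ≤ i) :
    Function.Bijective
      (fun x : WittVector p V =>
        WittVector.frobenius x - (p : WittVector p V) ^ i * x) := by
  have : PerfectRing V p := ⟨hV⟩
  obtain ⟨j, rfl⟩ := Nat.exists_eq_add_of_le' hi
  refine (bijective_iff_existsUnique _).2 fun y => ?_
  convert WittVector.existsUnique_frobenius_sub_mul_p_eq y ((p : WittVector p V) ^ j) using 4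
  ring
end

section
/- Let p be a prime number and let k be a perfect commutative ring of characteristic p. Then the module of Kähler differentials Ω_{W(k)/ℤ} of the ring of p-typical Witt vectors W(k) over ℤ is p-divisible: every element ω satisfies ω = p·η for some η; equivalently Ω_{W(k)/ℤ} = p·Ω_{W(k)/ℤ}. -/
/-! Every Witt vector over a perfect ring is `y ^ p + p * z`: choose `y` Teichmüller with the
right zeroth coefficient, so the difference is `V u = V (F w) = p * w`. Since `d(y ^ p + p * z)
= p • (y ^ (p - 1) • dy + dz)` and the differentials `dx` span `Ω`, all of `Ω` is divisible
by `p`. -/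

theorem KaehlerDifferential.exists_eq_nsmul_of_forall_eq_pow_add (R : Type*) {A : Type*}
    [CommRing R] [CommRing A] [Algebra R A] (n : ℕ) (h : ∀ x : A, ∃ y z : A, x = y ^ n + n * z)
    (ω : Ω[A⁄R]) : ∃ η, ω = n • η := by
  let nsmulMap : Ω[A⁄R] →ₗ[A] Ω[A⁄R] := n • LinearMap.id
  have hD : Set.range (D R A) ⊆ LinearMap.range nsmulMap := by
    rintro _ ⟨x, rfl⟩
    obtain ⟨y, z, rfl⟩ := h x
    refine ⟨y ^ (n - 1) • D R A y + D R A z, ?_⟩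
    simp [nsmulMap, Derivation.leibniz_pow, ← nsmul_eq_mul, smul_add]
  have hω : ω ∈ LinearMap.range nsmulMap := by
    rw [← Submodule.span_le, span_range_derivation] at hD
    exact hD Submodule.mem_top
  obtain ⟨η, hη⟩ := hω
  exact ⟨η, hη.symm⟩

namespace WittVector

variable {p : ℕ} [Fact p.Prime] {k : Type*} [CommRing k] [CharP k p] [PerfectRing k p]

theorem exists_eq_pow_add_p_mul (x : WittVector p k) :
    ∃ y z : WittVector p k, x = y ^ p + p * z := by
  obtain ⟨b, hb⟩ := surjective_frobenius k p (x.coeff 0)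
  set y := teichmuller p b
  have hcoeff : (x - y ^ p).coeff 0 = 0 := by
    change constantCoeff (x - y ^ p) = 0
    rw [map_sub, map_pow, constantCoeff_apply, constantCoeff_apply, teichmuller_coeff_zero,
      ← hb, frobenius_def, sub_self]
  obtain ⟨w, hw⟩ := (frobenius_bijective p k).surjective ((x - y ^ p).shift 1)
  have hV : x - y ^ p = w * p := by
    rw [← verschiebung_frobenius, hw]
    exact eq_iterate_verschiebung (n := 1) (by simpa using hcoeff)
  exact ⟨y, w, by linear_combination hV⟩

end WittVector

/-- For a perfect commutative ring `k` of characteristic `p`, the module of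
Kähler differentials of `W(k)` over `ℤ` is `p`-divisible: every element `ω`
satisfies `ω = p • η` for some `η`. -/
theorem kaehlerDifferential_wittVector_p_divisible (p : ℕ) [Fact p.Prime]
    (k : Type*) [CommRing k] [CharP k p]
    (hk : Function.Bijective (fun x : k => x ^ p)) :
    ∀ ω : KaehlerDifferential ℤ (WittVector p k),
      ∃ η : KaehlerDifferential ℤ (WittVector p k), ω = p • η := by
  have : PerfectRing k p := ⟨hk⟩
  exact KaehlerDifferential.exists_eq_nsmul_of_forall_eq_pow_add ℤ p
    WittVector.exists_eq_pow_add_p_mul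
end
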